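/- Let I be an ideal of a binomial ring R. The quotient R/I carries a binomial structure via (r + I choose n) = (r choose n) + I if and only if (e choose n) ∈ I for every e ∈ I and every n > 0. -/

import Mathlib

/-!
If `(r + I choose n) = (r choose n) + I` is well defined, then for `e ∈ I` and `n > 0` we get
`(e choose n) + I = (0 choose n) + I = 0`. Conversely, for `e ∈ I` Vandermonde gives
`(s + e choose n) = ∑ (s choose i) (e choose j) ≡ (s choose n) mod I`, so the operations descend to
`R ⧸ I`, and each of Ekedahl's axioms descends from the corresponding identity in `R`.

The one axiom that takes work is II, the expansion of `(ab choose n)`. Multiplied by `(n!)²` it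
becomes an identity between integer polynomials in `a` and `b` (binomial rings are torsion-free,
so nothing is lost). Such an identity holds once it holds at all pairs of natural numbers `(j, k)`,
and there it is the coefficient of `Xⁿ` in `(1 + X)^(jk) = ∑ₘ (j choose m) ((1 + X)^k - 1)^m`.
-/

/-- A numerical ring (Ekedahl): a commutative unital ring with unary binomial coefficient
operations satisfying axioms I–V. -/
structure NumericalRing (R : Type*) [CommRing R] where
  /-- The binomial coefficient operations `a ↦ (a choose n)`. -/
  choose : R → ℕ → R
  /-- Axiom I (Vandermonde): `(a+b choose n) = Σ_{p+q=n} (a choose p)(b choose q)`. -/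
  axiom_I : ∀ a b : R, ∀ n : ℕ, choose (a + b) n =
    ∑ pq ∈ Finset.HasAntidiagonal.antidiagonal n, choose a pq.1 * choose b pq.2
  /-- Axiom II: `(ab choose n) = Σ_{m=0}^{n} (a choose m)
    Σ_{q_1+⋯+q_m=n, q_i ≥ 1} (b choose q_1)⋯(b choose q_m)`. -/
  axiom_II : ∀ a b : R, ∀ n : ℕ, choose (a * b) n =
    ∑ m ∈ Finset.range (n + 1), choose a m *
      ∑ q ∈ (Finset.Nat.antidiagonalTuple m n).filter (fun q => ∀ i, 1 ≤ q i),
        ∏ i, choose b (q i)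
  /-- Axiom III: `(a choose m)(a choose n) =
    Σ_{k=0}^{n} (a choose m+k)(m+k choose n)(n choose k)`. -/
  axiom_III : ∀ a : R, ∀ m n : ℕ, choose a m * choose a n =
    ∑ k ∈ Finset.range (n + 1), choose a (m + k) * ((m + k).choose n : R) * (n.choose k : R)
  /-- Axiom IV: `(1 choose n) = 0` for `n ≥ 2`. -/
  axiom_IV : ∀ n : ℕ, 2 ≤ n → choose 1 n = 0
  /-- Axiom V: `(a choose 0) = 1`. -/
  axiom_V0 : ∀ a : R, choose a 0 = 1
  /-- Axiom V: `(a choose 1) = a`. -/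
  axiom_V1 : ∀ a : R, choose a 1 = a

open Finset Polynomial
open scoped Nat

theorem Finset.Nat.sum_antidiagonalTuple_succ {M : Type*} [AddCommMonoid M] (k n : ℕ)
    (f : (Fin (k + 1) → ℕ) → M) :
    ∑ q ∈ Nat.antidiagonalTuple (k + 1) n, f q =
      ∑ p ∈ antidiagonal n, ∑ q ∈ Nat.antidiagonalTuple k p.2, f (Fin.cons p.1 q) := by
  simp only [Finset.sum, Nat.antidiagonalTuple, Multiset.Nat.antidiagonalTuple,
    List.Nat.antidiagonalTuple, ← Multiset.coe_bind, Multiset.map_bind, Multiset.sum_bind]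
  simp only [Multiset.map_coe, List.map_map, Multiset.sum_coe, sum_map_val]
  rfl

theorem Polynomial.coeff_pow_eq_sum_antidiagonalTuple {R : Type*} [CommSemiring R] (p : R[X])
    (m n : ℕ) : (p ^ m).coeff n = ∑ q ∈ Nat.antidiagonalTuple m n, ∏ i, p.coeff (q i) := by
  induction m generalizing n with
  | zero => cases n <;> simp [coeff_one]
  | succ m ih =>
    simp only [pow_succ', coeff_mul, Nat.sum_antidiagonalTuple_succ, Fin.prod_univ_succ, ih,
      Finset.mul_sum, Fin.cons_zero, Fin.cons_succ]

def compositionSum {R : Type*} [CommSemiring R] (c : ℕ → R) (m n : ℕ) : R :=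
  ∑ q ∈ (Nat.antidiagonalTuple m n).filter (fun q => ∀ i, 1 ≤ q i), ∏ i, c (q i)

section compositionSum

variable {R : Type*} [CommSemiring R]

theorem compositionSum_congr {c c' : ℕ → R} (h : ∀ d, 1 ≤ d → c d = c' d) (m n : ℕ) :
    compositionSum c m n = compositionSum c' m n :=
  sum_congr rfl fun _ hq => prod_congr rfl fun i _ => h _ ((mem_filter.mp hq).2 i)

theorem compositionSum_eq_zero_of_lt (c : ℕ → R) {m n : ℕ} (h : n < m) :
    compositionSum c m n = 0 := by
  refine sum_eq_zero fun q hq => absurd h (not_lt.mpr ?_)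
  obtain ⟨hsum, hpos⟩ := mem_filter.mp hq
  calc m = ∑ _i : Fin m, 1 := by simp
    _ ≤ ∑ i, q i := sum_le_sum fun i _ => hpos i
    _ = n := Nat.mem_antidiagonalTuple.mp hsum

theorem Polynomial.coeff_pow_eq_compositionSum {p : R[X]} (hp : p.coeff 0 = 0) (m n : ℕ) :
    (p ^ m).coeff n = compositionSum p.coeff m n := by
  rw [coeff_pow_eq_sum_antidiagonalTuple, compositionSum, sum_filter_of_ne]
  intro q _ hq i
  by_contra! h
  exact hq (prod_eq_zero (mem_univ i) (by rwa [Nat.lt_one_iff.mp h]))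

end compositionSum

theorem Nat.cast_choose_mul_eq_sum_compositionSum {S : Type*} [CommRing S] (j k n : ℕ) :
    ((j * k).choose n : S) = ∑ m ∈ range (n + 1),
      (j.choose m : S) * compositionSum (fun d => (k.choose d : S)) m n := by
  set F : ℕ → S := fun m => (j.choose m : S) * compositionSum (fun d => (k.choose d : S)) m n
  have hcoeff : ∀ d, 1 ≤ d → ((X + 1 : S[X]) ^ k - 1).coeff d = k.choose d := by
    intro d hd
    rw [coeff_sub, coeff_X_add_one_pow, coeff_one, if_neg (by omega), sub_zero]
  have hexpand : (X + 1 : S[X]) ^ (j * k) =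
      ∑ m ∈ range (j + 1), ((X + 1) ^ k - 1) ^ m * (j.choose m : S[X]) := by
    rw [mul_comm, pow_mul, ← sub_add_cancel ((X + 1 : S[X]) ^ k) 1, add_pow]
    simp
  have hrange : ∑ m ∈ range (j + 1), F m = ∑ m ∈ range (n + 1), F m := by
    rw [sum_subset (s₁ := range (j + 1)) (s₂ := range (j + n + 1))
        (range_subset_range.mpr (by omega)),
      sum_subset (s₁ := range (n + 1)) (s₂ := range (j + n + 1))
        (range_subset_range.mpr (by omega))]
    all_goals
      intro m _ hm
      simp only [mem_range, not_lt] at hm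
    · simp [F, compositionSum_eq_zero_of_lt _ (show n < m by omega)]
    · simp [F, Nat.choose_eq_zero_of_lt (show j < m by omega)]
  rw [← coeff_X_add_one_pow, hexpand, finsetSum_coeff, ← hrange]
  refine sum_congr rfl fun m _ => ?_
  rw [← C_eq_natCast, coeff_mul_C, coeff_pow_eq_compositionSum (by simp [coeff_X_add_one_pow]),
    mul_comm, compositionSum_congr hcoeff]

def chooseMulExpansion {R : Type*} [CommSemiring R] (c : R → ℕ → R) (a b : R) (n : ℕ) : R :=
  ∑ m ∈ range (n + 1), c a m * compositionSum (c b) m n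

/-- `n! • n! • chooseMulExpansion Ring.choose a b n` with every `k! • (x choose k)` written as a
Pochhammer value, so that it makes sense in any ring; `n ! / m !` is exact since `m ≤ n`. -/
noncomputable def descPochhammerMulExpansion {R : Type*} [CommRing R] (a b : R) (n : ℕ) : R :=
  ∑ m ∈ range (n + 1), ∑ q ∈ (Nat.antidiagonalTuple m n).filter (fun q => ∀ i, 1 ≤ q i),
    (n ! / m ! * Nat.multinomial univ q) •
      ((descPochhammer ℤ m).smeval a * ∏ i, (descPochhammer ℤ (q i)).smeval b)

theorem Polynomial.map_smeval {R S : Type*} [Ring R] [Ring S] (f : R →+* S) (p : ℤ[X]) (x : R) :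
    f (p.smeval x) = p.smeval (f x) := by
  rw [← aeval_eq_smeval, ← aeval_eq_smeval]
  exact (aeval_algHom_apply f.toIntAlgHom x p).symm

theorem map_descPochhammerMulExpansion {R S : Type*} [CommRing R] [CommRing S] (f : R →+* S)
    (a b : R) (n : ℕ) :
    f (descPochhammerMulExpansion a b n) = descPochhammerMulExpansion (f a) (f b) n := by
  simp only [descPochhammerMulExpansion, map_sum, map_nsmul, map_mul, map_prod, map_smeval]

theorem map_chooseMulExpansion {R S : Type*} [CommSemiring R] [CommSemiring S] (f : R →+* S)
    {c : R → ℕ → R} {c' : S → ℕ → S} (hc : ∀ r n, c' (f r) n = f (c r n)) (a b : R) (n : ℕ) :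
    f (chooseMulExpansion c a b n) = chooseMulExpansion c' (f a) (f b) n := by
  simp only [chooseMulExpansion, compositionSum, map_sum, map_mul, map_prod, hc]

theorem factorial_smul_factorial_smul_chooseMulExpansion {R : Type*} [CommRing R]
    [BinomialRing R] (a b : R) (n : ℕ) :
    n ! • n ! • chooseMulExpansion Ring.choose a b n = descPochhammerMulExpansion a b n := by
  simp only [chooseMulExpansion, compositionSum, descPochhammerMulExpansion, smul_sum, mul_sum]
  refine sum_congr rfl fun m hm => sum_congr rfl fun q hq => ?_
  have hm : m ! ∣ n ! := Nat.factorial_dvd_factorial (Nat.lt_succ_iff.mp (mem_range.mp hm))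
  have hq : (∏ i, (q i)!) * Nat.multinomial univ q = n ! := by
    rw [Nat.multinomial_spec, Nat.mem_antidiagonalTuple.mp (mem_filter.mp hq).1]
  simp only [Ring.descPochhammer_eq_factorial_smul_choose, prod_smul, smul_mul_smul_comm,
    smul_smul]
  congr 1
  rw [mul_mul_mul_comm, Nat.div_mul_cancel hm, mul_comm (Nat.multinomial _ _), hq]

theorem Ring.choose_natCast_mul_natCast {R : Type*} [CommRing R] [BinomialRing R] (j k n : ℕ) :
    Ring.choose ((j : R) * k) n = chooseMulExpansion Ring.choose (j : R) k n := by
  have hk : Ring.choose (k : R) = fun d => (k.choose d : R) := funext (Ring.choose_natCast k)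
  rw [← Nat.cast_mul, chooseMulExpansion, hk]
  simp only [Ring.choose_natCast]
  exact Nat.cast_choose_mul_eq_sum_compositionSum j k n

theorem factorial_smul_descPochhammer_smeval_mul {R : Type*} [CommRing R] (a b : R) (n : ℕ) :
    n ! • (descPochhammer ℤ n).smeval (a * b) = descPochhammerMulExpansion a b n := by
  have universal : n ! • (descPochhammer ℤ n).smeval (.X 0 * .X 1 : MvPolynomial (Fin 2) ℤ) =
      descPochhammerMulExpansion (.X 0) (.X 1) n := by
    refine MvPolynomial.funext_set (fun _ => Set.range ((↑) : ℕ → ℤ))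
      (fun _ => Set.infinite_range_of_injective Nat.cast_injective) fun x hx => ?_
    obtain ⟨j, hj⟩ := hx 0 trivial
    obtain ⟨k, hk⟩ := hx 1 trivial
    simp only [map_nsmul, map_smeval, map_mul, map_descPochhammerMulExpansion,
      MvPolynomial.eval_X, ← hj, ← hk]
    rw [← factorial_smul_factorial_smul_chooseMulExpansion, ← Ring.choose_natCast_mul_natCast,
      Ring.descPochhammer_eq_factorial_smul_choose]
  have := congrArg (MvPolynomial.eval₂Hom (Int.castRingHom R) ![a, b]) universal
  simpa only [map_nsmul, map_smeval, map_mul, map_descPochhammerMulExpansion,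
    MvPolynomial.coe_eval₂Hom, MvPolynomial.eval₂_X, Matrix.cons_val_zero,
    Matrix.cons_val_one] using this

theorem Ring.choose_mul_eq_chooseMulExpansion {R : Type*} [CommRing R] [BinomialRing R]
    (a b : R) (n : ℕ) : Ring.choose (a * b) n = chooseMulExpansion Ring.choose a b n := by
  have := BinomialRing.toIsAddTorsionFree (R := R)
  refine nsmul_right_injective (n := n ! * n !) (by positivity) ?_
  simp only [mul_nsmul]
  rw [factorial_smul_factorial_smul_chooseMulExpansion, ← factorial_smul_descPochhammer_smeval_mul,
    Ring.descPochhammer_eq_factorial_smul_choose]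

theorem Nat.add_choose_left_mul_choose_sub {m n k : ℕ} (hk : k ≤ n) :
    (m + k).choose m * m.choose (n - k) = (m + k).choose n * n.choose k := by
  rw [Nat.choose_mul hk, Nat.add_sub_cancel, Nat.choose_symm_add]

theorem Ring.choose_mul_choose {R : Type*} [CommRing R] [BinomialRing R] (a : R) (m n : ℕ) :
    Ring.choose a m * Ring.choose a n = ∑ k ∈ range (n + 1),
      Ring.choose a (m + k) * ((m + k).choose n : R) * (n.choose k : R) := by
  have hsplit : Ring.choose a n =
      ∑ ij ∈ antidiagonal n, Ring.choose (a - m) ij.1 * (m.choose ij.2 : R) := by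
    conv_lhs => rw [← sub_add_cancel a (m : R), Ring.add_choose_eq n (Commute.all _ _)]
    simp only [Ring.choose_natCast]
  have hterm : ∀ i j, Ring.choose a m * (Ring.choose (a - m) i * (m.choose j : R)) =
      ((m + i).choose m * m.choose j : ℕ) • Ring.choose a (m + i) := by
    intro i j
    rw [mul_comm, mul_nsmul, Ring.choose_smul_choose a (Nat.le_add_right m i),
      Nat.add_sub_cancel_left]
    simp only [nsmul_eq_mul]
    ring
  rw [hsplit, mul_sum, Nat.sum_antidiagonal_eq_sum_range_succ_mk]
  refine sum_congr rfl fun k hk => ?_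
  rw [hterm, Nat.add_choose_left_mul_choose_sub (Nat.lt_succ_iff.mp (mem_range.mp hk))]
  simp only [nsmul_eq_mul, Nat.cast_mul]
  ring

section Descent

variable {R S : Type*} [CommRing R] [BinomialRing R] [CommRing S] {f : R →+* S}
  (hf : Function.Surjective f)

noncomputable def descendedChoose (x : S) (n : ℕ) : S :=
  f (Ring.choose (Function.surjInv hf x) n)

theorem descendedChoose_apply
    (hdesc : ∀ r s n, f r = f s → f (Ring.choose r n) = f (Ring.choose s n)) (r : R) (n : ℕ) :
    descendedChoose hf (f r) n = f (Ring.choose r n) :=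
  hdesc _ _ n (Function.surjInv_eq hf (f r))

noncomputable def NumericalRing.ofSurjective
    (hdesc : ∀ r s n, f r = f s → f (Ring.choose r n) = f (Ring.choose s n)) :
    NumericalRing S where
  choose := descendedChoose hf
  axiom_I x y n := by
    obtain ⟨a, rfl⟩ := hf x
    obtain ⟨b, rfl⟩ := hf y
    simp only [← map_add, descendedChoose_apply hf hdesc, Ring.add_choose_eq n (Commute.all a b),
      map_sum, map_mul]
  axiom_II x y n := by
    obtain ⟨a, rfl⟩ := hf x
    obtain ⟨b, rfl⟩ := hf y
    rw [← map_mul, descendedChoose_apply hf hdesc, Ring.choose_mul_eq_chooseMulExpansion,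
      map_chooseMulExpansion f (descendedChoose_apply hf hdesc)]
    rfl
  axiom_III x m n := by
    obtain ⟨a, rfl⟩ := hf x
    rw [descendedChoose_apply hf hdesc, descendedChoose_apply hf hdesc, ← map_mul,
      Ring.choose_mul_choose, map_sum]
    simp only [map_mul, map_natCast, descendedChoose_apply hf hdesc]
  axiom_IV n hn := by
    rw [← map_one f, descendedChoose_apply hf hdesc, ← Nat.cast_one, Ring.choose_natCast,
      Nat.choose_eq_zero_of_lt hn, Nat.cast_zero, map_zero]
  axiom_V0 x := by
    obtain ⟨a, rfl⟩ := hf x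
    rw [descendedChoose_apply hf hdesc, Ring.choose_zero_right, map_one]
  axiom_V1 x := by
    obtain ⟨a, rfl⟩ := hf x
    rw [descendedChoose_apply hf hdesc, Ring.choose_one_right]

end Descent

def Ideal.IsBinomial {R : Type*} [CommRing R] [BinomialRing R] (I : Ideal R) : Prop :=
  ∀ e ∈ I, ∀ n : ℕ, 0 < n → Ring.choose e n ∈ I

theorem Ideal.IsBinomial.mk_choose_eq {R : Type*} [CommRing R] [BinomialRing R] {I : Ideal R}
    (hI : I.IsBinomial) (r s : R) (n : ℕ) (h : Ideal.Quotient.mk I r = Ideal.Quotient.mk I s) :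
    Ideal.Quotient.mk I (Ring.choose r n) = Ideal.Quotient.mk I (Ring.choose s n) := by
  have he : r - s ∈ I := Ideal.Quotient.eq.mp h
  rw [← sub_add_cancel r s, add_comm, Ring.add_choose_eq n (Commute.all _ _), map_sum,
    sum_eq_single_of_mem (n, 0) (HasAntidiagonal.mem_antidiagonal.mpr (add_zero n)),
    Ring.choose_zero_right, mul_one]
  rintro ⟨i, j⟩ hij hne
  have hj : 0 < j := Nat.pos_of_ne_zero fun hj => hne (by simp_all)
  rw [map_mul, Ideal.Quotient.eq_zero_iff_mem.mpr (hI _ he j hj), mul_zero]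

/-- For an ideal `I` of a binomial ring `R`, the quotient `R/I` carries a binomial
(numerical) structure via `(r + I choose n) = (r choose n) + I` if and only if
`(e choose n) ∈ I` for every `e ∈ I` and every `n > 0`. -/
theorem quotient_binomial_iff_binomial_ideal {R : Type*} [CommRing R] [BinomialRing R]
    (I : Ideal R) :
    (∃ N : NumericalRing (R ⧸ I),
        ∀ (r : R) (n : ℕ),
          N.choose (Ideal.Quotient.mk I r) n = Ideal.Quotient.mk I (Ring.choose r n)) ↔
    (∀ e ∈ I, ∀ n : ℕ, 0 < n → Ring.choose e n ∈ I) := by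
  constructor
  · rintro ⟨N, hN⟩ e he n hn
    rw [← Ideal.Quotient.eq_zero_iff_mem, ← hN, Ideal.Quotient.eq_zero_iff_mem.mpr he,
      ← map_zero (Ideal.Quotient.mk I), hN, Ring.choose_zero_pos R hn, map_zero]
  · intro hI
    have hdesc := Ideal.IsBinomial.mk_choose_eq (I := I) hI
    exact ⟨.ofSurjective Ideal.Quotient.mk_surjective hdesc,
      descendedChoose_apply Ideal.Quotient.mk_surjective hdesc⟩
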